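/- For any integer k and integer n \ge 1, B_n^{(k)}(x) = x B_{n-1}^{(k)}(x) + \sum_{l=0}^{n-1} (-1)^{n-1-l} \binom{n-1}{l} \left\{ \sum_{m=0}^{n-1} (-1)^m \frac{(m+1)!}{(m+2)^k} S_2(n-1-l, m) \right\} (x-1)^l. -/

import Mathlib

open PowerSeries Finset Nat

/-- The formal power series `e^{-t}`. -/
noncomputable def expNeg : PowerSeries ℂ := PowerSeries.rescale (-1) (PowerSeries.exp ℂ)

/-- The generating function `Li_k(1-e^{-t})/(1-e^{-t}) = ∑_{m≥0} (1-e^{-t})^m/(m+1)^k`,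
given coefficientwise (the sum truncates since `(1-e^{-t})^m` has order `≥ m`). -/
noncomputable def polyBernoulliGF (k : ℤ) : PowerSeries ℂ :=
  PowerSeries.mk fun n => ∑ m ∈ Finset.range (n + 1),
    (((m : ℂ) + 1) ^ k)⁻¹ * PowerSeries.coeff n ((1 - expNeg) ^ m)

/-- The poly-Bernoulli polynomial `B_n^{(k)}(x)`, defined by
`Li_k(1-e^{-t})/(1-e^{-t}) · e^{xt} = ∑ B_n^{(k)}(x) tⁿ/n!`. -/
noncomputable def polyBernoulli (k : ℤ) (n : ℕ) (x : ℂ) : ℂ :=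
  (n ! : ℂ) * PowerSeries.coeff n
    (polyBernoulliGF k * PowerSeries.mk fun j => x ^ j / (j ! : ℂ))

/-- Stirling numbers of the second kind, via `(e^t-1)^m = m! ∑_{l} S₂(l,m) t^l/l!`. -/
noncomputable def stirling2 (l m : ℕ) : ℂ :=
  (l ! : ℂ) / (m ! : ℂ) * PowerSeries.coeff l ((PowerSeries.exp ℂ - 1) ^ m)

/-! With `u = 1 - e^{-t}`, the generating function of `B_n^{(k)}` is `L(u) e^{xt}`, where
`L(u) = Li_k(u)/u`. Since `du/dt = e^{-t}`, the chain rule gives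
`d/dt (L(u) e^{xt}) = x L(u) e^{xt} + e^{(x-1)t} L'(u)`, and `L'(u) = ∑ (m+1) u^m/(m+2)^k`.
Comparing coefficients of `t^{n-1}` gives the recurrence, and the coefficients of
`u^m = (-1)^m (e^{-t} - 1)^m` are Stirling numbers of the second kind. -/

theorem coeff_pow_eq_zero_of_lt {R : Type*} [Semiring R] {g : R⟦X⟧} (hg : constantCoeff g = 0)
    {j m : ℕ} (h : j < m) : coeff j (g ^ m) = 0 :=
  coeff_of_lt_order j <| (Nat.cast_lt.mpr h).trans_le (le_order_pow_of_constantCoeff_eq_zero m hg)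

theorem coeff_subst_eq_sum_range {R : Type*} [CommRing R] {g : R⟦X⟧} (hg : constantCoeff g = 0)
    (f : R⟦X⟧) {n M : ℕ} (hn : n < M) :
    coeff n (f.subst g) = ∑ d ∈ range M, coeff d f * coeff n (g ^ d) := by
  rw [coeff_subst' (HasSubst.of_constantCoeff_zero' hg)]
  refine finsum_eq_sum_of_support_subset _ fun d hd => ?_
  by_contra hdM
  exact hd <| show coeff d f • coeff n (g ^ d) = 0 by
    rw [coeff_pow_eq_zero_of_lt hg (by simp at hdM; omega), smul_zero]

theorem derivative_rescale {R : Type*} [CommSemiring R] (f : R⟦X⟧) (a : R) :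
    d⁄dX R (rescale a f) = a • rescale a (d⁄dX R f) := by
  ext n
  simp only [coeff_derivative, coeff_rescale, coeff_smul, smul_eq_mul]
  ring

theorem derivative_rescale_exp {A : Type*} [CommRing A] [Algebra ℚ A] (a : A) :
    d⁄dX A (rescale a (exp A)) = a • rescale a (exp A) := by
  rw [derivative_rescale, derivative_exp]

theorem mk_pow_div_factorial_eq_rescale_exp {K : Type*} [Field K] [CharZero K] (a : K) :
    (mk fun j => a ^ j / (j ! : K)) = rescale a (exp K) := by
  ext j
  simp [coeff_rescale, coeff_exp, div_eq_mul_inv]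

theorem constantCoeff_one_sub_expNeg : constantCoeff (1 - expNeg) = 0 := by
  rw [map_sub, map_one, expNeg, ← coeff_zero_eq_constantCoeff_apply, coeff_rescale, coeff_exp]
  simp

theorem derivative_one_sub_expNeg : d⁄dX ℂ (1 - expNeg) = expNeg := by
  rw [map_sub, derivative_one, expNeg, derivative_rescale_exp, zero_sub, neg_one_smul, neg_neg]

theorem coeff_one_sub_expNeg_pow (l m : ℕ) :
    coeff l ((1 - expNeg) ^ m) = (-1) ^ (l + m) * (m ! : ℂ) / (l ! : ℂ) * stirling2 l m := by
  have h : 1 - expNeg = C (-1 : ℂ) * rescale (-1 : ℂ) (exp ℂ - 1) := by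
    rw [map_sub, map_one, ← expNeg, map_neg, map_one, neg_one_mul, neg_sub]
  have hl : (l ! : ℂ) ≠ 0 := Nat.cast_ne_zero.mpr l.factorial_ne_zero
  have hm : (m ! : ℂ) ≠ 0 := Nat.cast_ne_zero.mpr m.factorial_ne_zero
  rw [h, mul_pow, ← map_pow, ← map_pow, coeff_C_mul, coeff_rescale, stirling2]
  field_simp
  ring

/-- The series `Li_k(u)/u = ∑_{m ≥ 0} u^m/(m+1)^k`. -/
noncomputable def liDivSeries (k : ℤ) : ℂ⟦X⟧ := mk fun m => (((m : ℂ) + 1) ^ k)⁻¹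

theorem polyBernoulliGF_eq_subst (k : ℤ) :
    polyBernoulliGF k = (liDivSeries k).subst (1 - expNeg) := by
  ext n
  rw [coeff_subst_eq_sum_range constantCoeff_one_sub_expNeg _ n.lt_succ_self, polyBernoulliGF,
    coeff_mk]
  simp only [liDivSeries, coeff_mk]

theorem coeff_derivative_liDivSeries (k : ℤ) (m : ℕ) :
    coeff m (d⁄dX ℂ (liDivSeries k)) = ((m : ℂ) + 1) / ((m : ℂ) + 2) ^ k := by
  rw [coeff_derivative, liDivSeries, coeff_mk, Nat.cast_succ, add_assoc, one_add_one_eq_two,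
    div_eq_mul_inv, mul_comm]

theorem derivative_polyBernoulliGF_mul_exp (k : ℤ) (x : ℂ) :
    d⁄dX ℂ (polyBernoulliGF k * rescale x (exp ℂ)) =
      x • (polyBernoulliGF k * rescale x (exp ℂ)) +
        rescale (x - 1) (exp ℂ) * (d⁄dX ℂ (liDivSeries k)).subst (1 - expNeg) := by
  rw [Derivation.leibniz, derivative_rescale_exp, polyBernoulliGF_eq_subst,
    derivative_subst (HasSubst.of_constantCoeff_zero' constantCoeff_one_sub_expNeg),
    derivative_one_sub_expNeg, expNeg, sub_eq_add_neg x, ← exp_mul_exp_eq_exp_add]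
  simp only [smul_eq_mul]
  rw [mul_smul_comm]
  ring

theorem polyBernoulli_succ (k : ℤ) (N : ℕ) (x : ℂ) :
    polyBernoulli k (N + 1) x = x * polyBernoulli k N x +
      (N ! : ℂ) *
        coeff N (rescale (x - 1) (exp ℂ) * (d⁄dX ℂ (liDivSeries k)).subst (1 - expNeg)) := by
  have h := congrArg (coeff N) (derivative_polyBernoulliGF_mul_exp k x)
  rw [coeff_derivative, map_add, coeff_smul, smul_eq_mul] at h
  simp only [polyBernoulli, mk_pow_div_factorial_eq_rescale_exp, factorial_succ]
  push_cast
  linear_combination (N ! : ℂ) * h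

theorem factorial_mul_coeff_rescale_exp_mul_subst (k : ℤ) (N : ℕ) (x : ℂ) :
    (N ! : ℂ) *
        coeff N (rescale (x - 1) (exp ℂ) * (d⁄dX ℂ (liDivSeries k)).subst (1 - expNeg)) =
      ∑ l ∈ range (N + 1), (-1 : ℂ) ^ (N - l) * (N.choose l : ℂ) *
        (∑ m ∈ range (N + 1),
          (-1 : ℂ) ^ m * ((m + 1)! : ℂ) / ((m : ℂ) + 2) ^ k * stirling2 (N - l) m) *
        (x - 1) ^ l := by
  rw [coeff_mul, Nat.sum_antidiagonal_eq_sum_range_succ_mk, mul_sum]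
  refine sum_congr rfl fun l hl => ?_
  have hlN : l ≤ N := Nat.lt_succ_iff.mp (mem_range.mp hl)
  rw [coeff_subst_eq_sum_range constantCoeff_one_sub_expNeg _ (by omega : N - l < N + 1),
    coeff_rescale, coeff_exp, Nat.cast_choose ℂ hlN]
  simp only [mul_sum, sum_mul]
  refine sum_congr rfl fun m _ => ?_
  rw [coeff_derivative_liDivSeries, coeff_one_sub_expNeg_pow, factorial_succ, pow_add]
  have hl : (l ! : ℂ) ≠ 0 := Nat.cast_ne_zero.mpr l.factorial_ne_zero
  have hNl : ((N - l)! : ℂ) ≠ 0 := Nat.cast_ne_zero.mpr (N - l).factorial_ne_zero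
  have hk : ((m : ℂ) + 2) ^ k ≠ 0 := zpow_ne_zero k (by exact_mod_cast (m + 1).succ_ne_zero)
  simp only [map_div₀, map_one, map_natCast, cast_mul]
  field_simp
  push_cast
  ring

theorem polyBernoulli_thm3 (k : ℤ) (n : ℕ) (hn : 1 ≤ n) (x : ℂ) :
    polyBernoulli k n x =
      x * polyBernoulli k (n - 1) x +
        ∑ l ∈ Finset.range n, (-1 : ℂ) ^ (n - 1 - l) * ((n - 1).choose l : ℂ) *
          (∑ m ∈ Finset.range n,
            (-1 : ℂ) ^ m * ((m + 1)! : ℂ) / ((m : ℂ) + 2) ^ k * stirling2 (n - 1 - l) m) *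
          (x - 1) ^ l := by
  obtain ⟨N, rfl⟩ := Nat.exists_eq_add_of_le' hn
  rw [Nat.add_sub_cancel, polyBernoulli_succ, factorial_mul_coeff_rescale_exp_mul_subst]
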